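/- For finitely generated groups G1, G2, the co-rank of the free product satisfies corank(G1 * G2) = corank(G1) + corank(G2). -/

import Mathlib

/-- `G` surjects onto the free abelian group of rank `n`. -/
def SurjOntoFreeAbelian (G : Type*) [Group G] (n : ℕ) : Prop :=
  ∃ f : G →* Multiplicative (Fin n → ℤ), Function.Surjective f

/-- The Betti number of `G` is `b`: the maximal rank of a free abelian quotient of `G`. -/
def BettiIs (G : Type*) [Group G] (b : ℕ) : Prop :=
  SurjOntoFreeAbelian G b ∧ ∀ m, SurjOntoFreeAbelian G m → m ≤ b

/-- `G` surjects onto the free group of rank `n`. -/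
def SurjOntoFree (G : Type*) [Group G] (n : ℕ) : Prop :=
  ∃ f : G →* FreeGroup (Fin n), Function.Surjective f

/-- The co-rank of `G` is `c`: the maximal rank of a free quotient of `G`. -/
def CorankIs (G : Type*) [Group G] (c : ℕ) : Prop :=
  SurjOntoFree G c ∧ ∀ m, SurjOntoFree G m → m ≤ c

/-! A surjection `G₁ ∗ G₂ → F_m` maps each factor onto a finitely generated subgroup of `F_m`, which
is free (Nielsen–Schreier) of some finite rank `rᵢ ≤ cᵢ`. These two subgroups generate `F_m`, so
`F_{r₁+r₂} ≅ F_{r₁} ∗ F_{r₂}` surjects onto `F_m`, and abelianizing gives `m ≤ r₁ + r₂`. Conversely,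
the free product of surjections `Gᵢ → F_{cᵢ}` surjects onto `F_{c₁} ∗ F_{c₂} ≅ F_{c₁+c₂}`. -/

open Function Monoid
open scoped Cardinal Monoid.Coprod

universe u v

theorem Abelianization.map_surjective {G H : Type*} [Group G] [Group H] {f : G →* H}
    (hf : Surjective f) : Surjective (map f) := by
  intro y
  obtain ⟨x, rfl⟩ := QuotientGroup.mk_surjective y
  obtain ⟨w, rfl⟩ := hf x
  exact ⟨of w, rfl⟩

-- Abelianizing `f` gives a surjection between free `ℤ`-modules with bases `α` and `β`.
theorem FreeGroup.lift_mk_le_of_surjective {α : Type u} {β : Type v}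
    {f : FreeGroup α →* FreeGroup β} (hf : Surjective f) :
    Cardinal.lift.{u} #β ≤ Cardinal.lift.{v} #α := by
  let g : FreeAbelianGroup α →+ FreeAbelianGroup β := (Abelianization.map f).toAdditive
  have hrank := g.toIntLinearMap.lift_rank_le_of_surjective (Abelianization.map_surjective hf)
  rwa [← (FreeAbelianGroup.basis α).mk_eq_rank'', ← (FreeAbelianGroup.basis β).mk_eq_rank'']
    at hrank

theorem FreeGroup.le_of_surjective {k m : ℕ} {f : FreeGroup (Fin k) →* FreeGroup (Fin m)}
    (hf : Surjective f) : m ≤ k := by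
  simpa using lift_mk_le_of_surjective hf

theorem IsFreeGroup.finite_generators (G : Type u) [Group G] [IsFreeGroup G] [Group.FG G] :
    Finite (Generators G) := by
  obtain ⟨α, _, φ, hφ⟩ := Group.fg_iff_exists_freeGroup_hom_surjective_finite.mp ‹Group.FG G›
  have hle := FreeGroup.lift_mk_le_of_surjective
    (f := (toFreeGroup G).toMonoidHom.comp φ) ((toFreeGroup G).surjective.comp hφ)
  rw [← Cardinal.lt_aleph0_iff_finite, ← Cardinal.lift_lt_aleph0.{u, 0}]
  exact hle.trans_lt (Cardinal.lift_lt_aleph0.mpr (Cardinal.lt_aleph0_of_finite α))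

theorem IsFreeGroup.exists_mulEquiv_freeGroup_fin (G : Type u) [Group G] [IsFreeGroup G]
    [Group.FG G] : ∃ r : ℕ, Nonempty (G ≃* FreeGroup (Fin r)) := by
  have := finite_generators G
  obtain ⟨r, ⟨e⟩⟩ := Finite.exists_equiv_fin (Generators G)
  exact ⟨r, ⟨(toFreeGroup G).trans (FreeGroup.freeGroupCongr e)⟩⟩

def FreeGroup.sumMulEquivCoprod (α β : Type*) :
    FreeGroup (α ⊕ β) ≃* FreeGroup α ∗ FreeGroup β :=
  MonoidHom.toMulEquiv (FreeGroup.lift (Sum.elim (Coprod.inl ∘ of) (Coprod.inr ∘ of)))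
    (Coprod.lift (map Sum.inl) (map Sum.inr)) (ext_hom _ _ <| Sum.rec (fun _ ↦ rfl) (fun _ ↦ rfl))
    (Coprod.hom_ext (ext_hom _ _ fun _ ↦ rfl) (ext_hom _ _ fun _ ↦ rfl))

def FreeGroup.finAddMulEquivCoprod (a b : ℕ) :
    FreeGroup (Fin (a + b)) ≃* FreeGroup (Fin a) ∗ FreeGroup (Fin b) :=
  (freeGroupCongr finSumFinEquiv.symm).trans (sumMulEquivCoprod _ _)

theorem Monoid.Coprod.map_surjective {M N M' N' : Type*} [Monoid M] [Monoid N] [Monoid M']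
    [Monoid N'] {f : M →* M'} {g : N →* N'} (hf : Surjective f) (hg : Surjective g) :
    Surjective (map f g) := by
  rw [← MonoidHom.mrange_eq_top, mrange_eq, map_comp_inl, map_comp_inr, MonoidHom.mrange_comp,
    MonoidHom.mrange_comp, MonoidHom.mrange_eq_top.2 hf, MonoidHom.mrange_eq_top.2 hg,
    ← MonoidHom.mrange_eq_map, ← MonoidHom.mrange_eq_map, mrange_inl_sup_mrange_inr]

theorem Monoid.Coprod.lift_subtype_range_surjective {G H K : Type*} [Group G] [Group H] [Group K]
    {f : G ∗ H →* K} (hf : Surjective f) :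
    Surjective (lift (f.comp inl).range.subtype (f.comp inr).range.subtype) := by
  have hfactor : f = (lift (f.comp inl).range.subtype (f.comp inr).range.subtype).comp
      (map (f.comp inl).rangeRestrict (f.comp inr).rangeRestrict) := hom_ext rfl rfl
  exact Surjective.of_comp (hfactor ▸ hf)

theorem SurjOntoFree.coprod {G H : Type*} [Group G] [Group H] {a b : ℕ}
    (ha : SurjOntoFree G a) (hb : SurjOntoFree H b) : SurjOntoFree (G ∗ H) (a + b) := by
  obtain ⟨f, hf⟩ := ha
  obtain ⟨g, hg⟩ := hb
  let e := (FreeGroup.finAddMulEquivCoprod a b).symm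
  exact ⟨e.toMonoidHom.comp (Coprod.map f g), e.surjective.comp (Coprod.map_surjective hf hg)⟩

theorem CorankIs.exists_le_mulEquiv_range {G : Type*} [Group G] [Group.FG G] {c m : ℕ}
    (h : CorankIs G c) (f : G →* FreeGroup (Fin m)) :
    ∃ r ≤ c, Nonempty (f.range ≃* FreeGroup (Fin r)) := by
  have : Group.FG f.range := Group.fg_of_surjective f.rangeRestrict_surjective
  -- `f.range` is free by Nielsen–Schreier (the instance `subgroupIsFreeOfIsFree`).
  obtain ⟨r, ⟨e⟩⟩ := IsFreeGroup.exists_mulEquiv_freeGroup_fin f.range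
  exact ⟨r, h.2 r ⟨e.toMonoidHom.comp f.rangeRestrict,
    e.surjective.comp f.rangeRestrict_surjective⟩, ⟨e⟩⟩

theorem stmt11 (G1 G2 : Type*) [Group G1] [Group G2] [Group.FG G1] [Group.FG G2]
    (c1 c2 : ℕ) (h1 : CorankIs G1 c1) (h2 : CorankIs G2 c2) :
    CorankIs (Monoid.Coprod G1 G2) (c1 + c2) := by
  refine ⟨h1.1.coprod h2.1, fun m ⟨f, hf⟩ => ?_⟩
  obtain ⟨r1, hr1, ⟨e1⟩⟩ := h1.exists_le_mulEquiv_range (f.comp Coprod.inl)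
  obtain ⟨r2, hr2, ⟨e2⟩⟩ := h2.exists_le_mulEquiv_range (f.comp Coprod.inr)
  let e := (FreeGroup.finAddMulEquivCoprod r1 r2).trans (e1.coprodCongr e2).symm
  have hm : m ≤ r1 + r2 := FreeGroup.le_of_surjective (f := (Coprod.lift _ _).comp e.toMonoidHom)
    ((Coprod.lift_subtype_range_surjective hf).comp e.surjective)
  omega
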